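/- arXiv:1101.2496 — 3 statements merged into one kernel-verified Lean document; each statement's English description precedes it below -/
import Mathlib

section
/- Let d ∈ ℕ and α, β > 0. Let T₀ ⊂ ℝ^d be a regular d-simplex of unit volume. Then for every d-simplex T ⊂ ℝ^d of unit volume, E_{∞;α,β}(T) ≥ E_{∞;α,β}(T₀); i.e., among all simplices of unit volume, the asymmetric uniform error of best approximation of Q(x) = Σ_{j=1}^d x_j² by affine functions is minimized by the regular simplex. -/
/-!
Write an affine approximant of `Q` as `Q - u = ‖x - z‖² - r`. On a set `T` the error is then at
least `αβ/(α+β)` times the spread `max_T ‖x - z‖² - min_T ‖x - z‖²`. If `p` is the point of `T`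
nearest to `z`, the obtuse-angle property of the projection puts every vertex of `T` within
squared distance `ρ` (that spread) of `p`. For a simplex in such a ball, AM–GM applied to the
eigenvalues of the Gram matrix of the lifted vertices `(t, vᵢ - p) ∈ ℝ^(d+1)` gives
`t² det(A)² ≤ (t² + ρ)^(d+1)`, where `A` is the edge matrix, with equality for the regular
simplex about its centroid and a suitable `t`. Equal volumes give equal `|det A|`, so the spread
for any unit simplex is at least the squared circumradius `R` of the regular one; and on the
regular simplex, centre `z` at the circumcentre and level `r = αR/(α+β)` achieve `αβ/(α+β)·R`.
-/

open MeasureTheory Metric Set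

/-- The asymmetric uniform error of best approximation of `Q(x) = ∑ xⱼ²` by affine
functions `x ↦ ⟪a, x⟫ + c` on the set `T ⊆ ℝ^d`. -/
noncomputable def EinfAB (d : ℕ) (α β : ℝ) (T : Set (EuclideanSpace ℝ (Fin d))) : ℝ :=
  ⨅ (a : EuclideanSpace ℝ (Fin d)) (c : ℝ),
    ⨆ x : T,
      (α * max ((∑ j, x.1 j ^ 2) - ((inner ℝ a x.1 : ℝ) + c)) 0 +
        β * max (-((∑ j, x.1 j ^ 2) - ((inner ℝ a x.1 : ℝ) + c))) 0)


open Matrix RealInnerProductSpace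

theorem Real.prod_le_arith_mean_pow {ι : Type*} [Fintype ι] (z : ι → ℝ) (hz : ∀ i, 0 ≤ z i) :
    ∏ i, z i ≤ ((∑ i, z i) / Fintype.card ι) ^ Fintype.card ι := by
  rcases isEmpty_or_nonempty ι with _ | _
  · simp
  have hn : (Fintype.card ι : ℝ) ≠ 0 := by positivity
  have hmean := Real.geom_mean_le_arith_mean_weighted Finset.univ
    (fun _ => (Fintype.card ι : ℝ)⁻¹) z (fun _ _ => by positivity) (by simp [hn])
    (fun i _ => hz i)
  calc ∏ i, z i = (∏ i, z i ^ (Fintype.card ι : ℝ)⁻¹) ^ Fintype.card ι := by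
        rw [← Finset.prod_pow]
        exact Finset.prod_congr rfl fun i _ =>
          (Real.rpow_inv_natCast_pow (hz i) (by positivity)).symm
    _ ≤ ((∑ i, z i) / Fintype.card ι) ^ Fintype.card ι := by
        gcongr
        · exact Finset.prod_nonneg fun i _ => Real.rpow_nonneg (hz i) _
        · simpa [← Finset.mul_sum, div_eq_inv_mul] using hmean

theorem Matrix.PosSemidef.det_le_trace_div_pow {n : Type*} [Fintype n] [DecidableEq n]
    {A : Matrix n n ℝ} (hA : A.PosSemidef) :
    A.det ≤ (A.trace / Fintype.card n) ^ Fintype.card n := by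
  rw [hA.isHermitian.det_eq_prod_eigenvalues, hA.isHermitian.trace_eq_sum_eigenvalues]
  simpa using Real.prod_le_arith_mean_pow _ hA.eigenvalues_nonneg

noncomputable section

variable {d : ℕ}

def simplexEdgeMatrix (v : Fin (d + 1) → EuclideanSpace ℝ (Fin d)) : Matrix (Fin d) (Fin d) ℝ :=
  Matrix.of fun i => v i.succ - v 0

def simplexLiftMatrix (v : Fin (d + 1) → EuclideanSpace ℝ (Fin d))
    (p : EuclideanSpace ℝ (Fin d)) (t : ℝ) : Matrix (Fin (d + 1)) (Fin (d + 1)) ℝ :=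
  Matrix.of fun i => Fin.cons t (v i - p)

theorem det_simplexLiftMatrix (v : Fin (d + 1) → EuclideanSpace ℝ (Fin d))
    (p : EuclideanSpace ℝ (Fin d)) (t : ℝ) :
    (simplexLiftMatrix v p t).det = t * (simplexEdgeMatrix v).det := by
  set N := simplexLiftMatrix v p t
  set N' : Matrix (Fin (d + 1)) (Fin (d + 1)) ℝ :=
    Matrix.of fun i => if i = 0 then N 0 else N i - N 0
  have hrow : N.det = N'.det :=
    Matrix.det_eq_of_forall_row_eq_smul_add_const (fun i => if i = 0 then 0 else 1) 0 (by simp)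
      fun i j => by by_cases hi : i = 0 <;> simp [N', hi]
  have hcol : ∀ i, N' i 0 = if i = 0 then t else 0 := fun i => by
    by_cases hi : i = 0 <;> simp [N', N, simplexLiftMatrix, hi]
  have hminor : N'.submatrix Fin.succ Fin.succ = simplexEdgeMatrix v := by
    ext i j
    simp [N', N, simplexLiftMatrix, simplexEdgeMatrix, Fin.succ_ne_zero]
  rw [hrow, Matrix.det_succ_column_zero, Fin.sum_univ_succ]
  simp [hcol, hminor, Fin.succ_ne_zero]

theorem simplexLiftMatrix_mul_transpose_apply (v : Fin (d + 1) → EuclideanSpace ℝ (Fin d))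
    (p : EuclideanSpace ℝ (Fin d)) (t : ℝ) (i j : Fin (d + 1)) :
    (simplexLiftMatrix v p t * (simplexLiftMatrix v p t)ᵀ) i j = t ^ 2 + ⟪v i - p, v j - p⟫ := by
  simp [Matrix.mul_apply, simplexLiftMatrix, Fin.sum_univ_succ, PiLp.inner_apply, sq, mul_comm]

theorem sq_mul_sq_det_simplexEdgeMatrix_le (v : Fin (d + 1) → EuclideanSpace ℝ (Fin d))
    (p : EuclideanSpace ℝ (Fin d)) (t : ℝ) {R : ℝ} (hv : ∀ i, ‖v i - p‖ ^ 2 ≤ R) :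
    t ^ 2 * (simplexEdgeMatrix v).det ^ 2 ≤ (t ^ 2 + R) ^ (d + 1) := by
  set N := simplexLiftMatrix v p t
  have hG : (N * Nᵀ).PosSemidef := by
    simpa using Matrix.posSemidef_self_mul_conjTranspose N
  have htr : (N * Nᵀ).trace ≤ (d + 1) * (t ^ 2 + R) := by
    rw [Matrix.trace]
    simp only [Matrix.diag_apply, N, simplexLiftMatrix_mul_transpose_apply,
      real_inner_self_eq_norm_sq]
    calc ∑ i, (t ^ 2 + ‖v i - p‖ ^ 2) ≤ ∑ _i : Fin (d + 1), (t ^ 2 + R) := by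
          gcongr with i; exact hv i
      _ = (d + 1) * (t ^ 2 + R) := by
          simp only [Finset.sum_const, Finset.card_univ, Fintype.card_fin, nsmul_eq_mul]
          push_cast; ring
  calc t ^ 2 * (simplexEdgeMatrix v).det ^ 2 = (N * Nᵀ).det := by
        rw [Matrix.det_mul, Matrix.det_transpose, det_simplexLiftMatrix]; ring
    _ ≤ ((N * Nᵀ).trace / (d + 1)) ^ (d + 1) := by simpa using hG.det_le_trace_div_pow
    _ ≤ (t ^ 2 + R) ^ (d + 1) := by
        gcongr
        · exact div_nonneg hG.trace_nonneg (by positivity)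
        · rwa [div_le_iff₀' (by positivity)]

theorem sq_mul_sq_det_simplexEdgeMatrix_eq (v : Fin (d + 1) → EuclideanSpace ℝ (Fin d))
    (p : EuclideanSpace ℝ (Fin d)) (t R : ℝ)
    (hv : ∀ i j, ⟪v i - p, v j - p⟫ = if i = j then R else -t ^ 2) :
    t ^ 2 * (simplexEdgeMatrix v).det ^ 2 = (t ^ 2 + R) ^ (d + 1) := by
  set N := simplexLiftMatrix v p t
  have hG : N * Nᵀ = (t ^ 2 + R) • (1 : Matrix (Fin (d + 1)) (Fin (d + 1)) ℝ) := by
    ext i j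
    rw [simplexLiftMatrix_mul_transpose_apply, hv]
    by_cases h : i = j <;> simp [h]
  calc t ^ 2 * (simplexEdgeMatrix v).det ^ 2 = (N * Nᵀ).det := by
        rw [Matrix.det_mul, Matrix.det_transpose, det_simplexLiftMatrix]; ring
    _ = (t ^ 2 + R) ^ (d + 1) := by simp [hG]

def unitSimplexVertex (d : ℕ) : Fin (d + 1) → EuclideanSpace ℝ (Fin d) :=
  Fin.cons 0 fun i => EuclideanSpace.single i 1

theorem volume_convexHull_eq (v : Fin (d + 1) → EuclideanSpace ℝ (Fin d)) :
    volume (convexHull ℝ (range v)) =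
      ENNReal.ofReal |(simplexEdgeMatrix v).det| *
        volume (convexHull ℝ (range (unitSimplexVertex d))) := by
  set f := Matrix.toEuclideanLin (simplexEdgeMatrix v)ᵀ
  have hf : LinearMap.det f = (simplexEdgeMatrix v).det := by
    simp only [f]
    rw [Matrix.toEuclideanLin_eq_toLin_orthonormal, LinearMap.det_toLin, Matrix.det_transpose]
  set g : EuclideanSpace ℝ (Fin d) →ᵃ[ℝ] EuclideanSpace ℝ (Fin d) :=
    AffineMap.const ℝ _ (v 0) + f.toAffineMap
  have hgv : g ∘ unitSimplexVertex d = v := by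
    funext i
    refine Fin.cases ?_ (fun i => ?_) i
    · simp [g, unitSimplexVertex]
    · ext j
      simp [g, f, unitSimplexVertex, simplexEdgeMatrix, Matrix.mulVec_single]
  have himage : convexHull ℝ (range v) =
      (v 0 + ·) '' (f '' convexHull ℝ (range (unitSimplexVertex d))) := by
    rw [Set.image_image, ← hgv, Set.range_comp, ← AffineMap.image_convexHull]
    congr 1
    funext x
    simp [g, unitSimplexVertex]
  rw [himage, Set.image_add_left, measure_preimage_add, Measure.addHaar_image_linearMap, hf]

theorem abs_det_simplexEdgeMatrix_eq_of_volume_eq {v w : Fin (d + 1) → EuclideanSpace ℝ (Fin d)}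
    (h : volume (convexHull ℝ (range v)) = volume (convexHull ℝ (range w)))
    (h0 : volume (convexHull ℝ (range v)) ≠ 0) :
    |(simplexEdgeMatrix v).det| = |(simplexEdgeMatrix w).det| := by
  rw [volume_convexHull_eq v, volume_convexHull_eq w] at h
  rw [volume_convexHull_eq v] at h0
  have hfin : volume (convexHull ℝ (range (unitSimplexVertex d))) ≠ ⊤ :=
    ((finite_range _).isCompact_convexHull (𝕜 := ℝ)).measure_lt_top.ne
  rwa [ENNReal.mul_left_inj (right_ne_zero_of_mul h0) hfin,
    ENNReal.ofReal_eq_ofReal_iff (abs_nonneg _) (abs_nonneg _)] at h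

end

section RegularSimplex

variable {E ι : Type*} [NormedAddCommGroup E] [InnerProductSpace ℝ E] [Fintype ι] [DecidableEq ι]

theorem inner_eq_of_sum_eq_zero_of_norm_sub_eq (w : ι → E) (hsum : ∑ i, w i = 0) {s : ℝ}
    (hw : ∀ i j, i ≠ j → ‖w i - w j‖ = s) (i j : ι) :
    ⟪w i, w j⟫ = if i = j then (Fintype.card ι - 1) * (s ^ 2 / (2 * Fintype.card ι))
      else -(s ^ 2 / (2 * Fintype.card ι)) := by
  have : Nonempty ι := ⟨i⟩
  obtain ⟨n, hn_def⟩ : ∃ n : ℝ, (Fintype.card ι : ℝ) = n := ⟨_, rfl⟩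
  have hn : n ≠ 0 := by rw [← hn_def]; positivity
  have hdist : ∀ i j, ‖w i - w j‖ ^ 2 = s ^ 2 - if i = j then s ^ 2 else 0 := by
    intro i j
    by_cases h : i = j
    · simp [h]
    · simp [h, hw i j h]
  have hpol : ∀ i j, ⟪w i, w j⟫ = (‖w i‖ ^ 2 + ‖w j‖ ^ 2 - ‖w i - w j‖ ^ 2) / 2 := by
    intro i j
    linarith [norm_sub_sq_real (w i) (w j)]
  have hrow : ∀ i, n * ‖w i‖ ^ 2 + ∑ j, ‖w j‖ ^ 2 = (n - 1) * s ^ 2 := by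
    intro i
    have h0 : ∑ j, ⟪w i, w j⟫ = 0 := by rw [← inner_sum, hsum, inner_zero_right]
    simp only [hpol, hdist, ← Finset.sum_div, Finset.sum_add_distrib, Finset.sum_sub_distrib,
      Finset.sum_const, Finset.card_univ, Finset.sum_ite_eq, Finset.mem_univ, if_true,
      nsmul_eq_mul, hn_def] at h0
    linarith
  have hS : ∑ j, ‖w j‖ ^ 2 = (n - 1) * s ^ 2 / 2 := by
    have := Finset.sum_congr rfl fun i (_ : i ∈ Finset.univ) => hrow i
    simp only [Finset.sum_add_distrib, ← Finset.mul_sum, Finset.sum_const, Finset.card_univ,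
      nsmul_eq_mul, hn_def] at this
    apply mul_left_cancel₀ hn
    linarith
  have hR : ∀ i, ‖w i‖ ^ 2 = (n - 1) * (s ^ 2 / (2 * n)) := by
    intro i
    have := hrow i
    rw [hS] at this
    field_simp
    linarith
  rw [hn_def, hpol, hR, hR, hdist]
  by_cases h : i = j
  · simp [h]
  · simp only [h, ↓reduceIte, sub_zero]
    field_simp
    ring

theorem exists_inner_sub_eq_of_dist_eq [Nonempty ι] (v : ι → E) {s : ℝ}
    (hv : ∀ i j, i ≠ j → dist (v i) (v j) = s) :
    ∃ g : E, ∀ i j, ⟪v i - g, v j - g⟫ =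
      if i = j then (Fintype.card ι - 1) * (s ^ 2 / (2 * Fintype.card ι))
      else -(s ^ 2 / (2 * Fintype.card ι)) := by
  have hn : (Fintype.card ι : ℝ) ≠ 0 := by positivity
  set g : E := (Fintype.card ι : ℝ)⁻¹ • ∑ k, v k
  have hsum : ∑ i, (v i - g) = 0 := by
    rw [Finset.sum_sub_distrib, Finset.sum_const, Finset.card_univ, ← Nat.cast_smul_eq_nsmul ℝ,
      smul_smul, mul_inv_cancel₀ hn, one_smul, sub_self]
  refine ⟨g, inner_eq_of_sum_eq_zero_of_norm_sub_eq (v · - g) hsum fun i j hij => ?_⟩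
  rw [sub_sub_sub_cancel_right, ← dist_eq_norm, hv i j hij]

end RegularSimplex

theorem exists_forall_norm_sub_sq_add_le {F : Type*} [NormedAddCommGroup F]
    [InnerProductSpace ℝ F] {K : Set F} (hne : K.Nonempty) (hc : IsComplete K)
    (hK : Convex ℝ K) (u : F) :
    ∃ p ∈ K, ∀ y ∈ K, ‖y - p‖ ^ 2 + ‖p - u‖ ^ 2 ≤ ‖y - u‖ ^ 2 := by
  obtain ⟨p, hp, hmin⟩ := exists_norm_eq_iInf_of_complete_convex hne hc hK u
  refine ⟨p, hp, fun y hy => ?_⟩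
  have hobtuse := (norm_eq_iInf_iff_real_inner_le_zero hK hp).1 hmin y hy
  calc ‖y - p‖ ^ 2 + ‖p - u‖ ^ 2 ≤ ‖y - p‖ ^ 2 - 2 * ⟪y - p, u - p⟫ + ‖u - p‖ ^ 2 := by
        rw [norm_sub_rev p u, real_inner_comm]; linarith
    _ = ‖y - u‖ ^ 2 := by rw [← norm_sub_sq_real, sub_sub_sub_cancel_right]

theorem norm_sub_sq_le_of_mem_convexHull {E ι : Type*} [SeminormedAddCommGroup E]
    [NormedSpace ℝ E] {v : ι → E} {g x : E} {R : ℝ} (hx : x ∈ convexHull ℝ (range v))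
    (hv : ∀ i, ‖v i - g‖ ^ 2 ≤ R) : ‖x - g‖ ^ 2 ≤ R := by
  obtain ⟨_, ⟨i, rfl⟩, hi⟩ := convexHull_exists_dist_ge hx g
  rw [dist_eq_norm, dist_eq_norm] at hi
  exact (pow_le_pow_left₀ (norm_nonneg _) hi 2).trans (hv i)

def asymLoss (α β e : ℝ) : ℝ := α * max e 0 + β * max (-e) 0

section asymLoss

variable {α β : ℝ}

theorem asymLoss_nonneg (hα : 0 ≤ α) (hβ : 0 ≤ β) (e : ℝ) : 0 ≤ asymLoss α β e := by
  unfold asymLoss; positivity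

@[fun_prop]
theorem continuous_asymLoss : Continuous (asymLoss α β) := by
  unfold asymLoss; fun_prop

theorem asymLoss_sub_le (hα : 0 < α) (hβ : 0 < β) {s R : ℝ} (hs₀ : 0 ≤ s) (hsR : s ≤ R) :
    asymLoss α β (s - α * R / (α + β)) ≤ α * β / (α + β) * R := by
  have hαβ : 0 < α + β := by linarith
  have hR : α * R / (α + β) + β * R / (α + β) = R := by field_simp
  unfold asymLoss
  rcases le_total (s - α * R / (α + β)) 0 with h | h
  · rw [max_eq_right h, max_eq_left (by linarith)]
    calc α * 0 + β * -(s - α * R / (α + β)) ≤ β * (α * R / (α + β)) := by nlinarith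
      _ = α * β / (α + β) * R := by ring
  · rw [max_eq_left h, max_eq_right (by linarith)]
    calc α * (s - α * R / (α + β)) + β * 0 ≤ α * (β * R / (α + β)) := by nlinarith
      _ = α * β / (α + β) * R := by ring

theorem mul_sub_le_of_asymLoss_le (hα : 0 < α) (hβ : 0 < β) {M m S : ℝ}
    (hM : asymLoss α β M ≤ S) (hm : asymLoss α β m ≤ S) : α * β / (α + β) * (M - m) ≤ S := by
  have hαβ : 0 < α + β := by linarith
  have hαM : α * M ≤ S := by
    refine le_trans ?_ hM
    unfold asymLoss
    nlinarith [le_max_left M 0, le_max_right (-M) 0]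
  have hβm : -(β * m) ≤ S := by
    refine le_trans ?_ hm
    unfold asymLoss
    nlinarith [le_max_right m 0, le_max_left (-m) 0]
  rw [div_mul_eq_mul_div, div_le_iff₀ hαβ]
  nlinarith

end asymLoss

/-- `Q(x) - ⟪a, x⟫ - c = ‖x - a / 2‖² - (‖a / 2‖² + c)`, so the affine approximants of `Q` are
parametrized by a centre `z` and a level `r`, with error `asymLoss α β (‖x - z‖² - r)` at `x`. -/
noncomputable def asymErr {E : Type*} [SeminormedAddCommGroup E] (α β : ℝ) (T : Set E) (z : E)
    (r : ℝ) : ℝ :=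
  ⨆ x : T, asymLoss α β (‖(x : E) - z‖ ^ 2 - r)

section asymErr

variable {E : Type*} [SeminormedAddCommGroup E] {α β : ℝ} {T : Set E}

theorem asymErr_nonneg (hα : 0 ≤ α) (hβ : 0 ≤ β) (z : E) (r : ℝ) : 0 ≤ asymErr α β T z r :=
  Real.iSup_nonneg fun _ => asymLoss_nonneg hα hβ _

theorem asymLoss_le_asymErr (hT : IsCompact T) {x : E} (hx : x ∈ T) (z : E) (r : ℝ) :
    asymLoss α β (‖x - z‖ ^ 2 - r) ≤ asymErr α β T z r := by
  have hbdd : BddAbove (range fun y : T => asymLoss α β (‖(y : E) - z‖ ^ 2 - r)) := by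
    rw [← image_eq_range (fun y => asymLoss α β (‖y - z‖ ^ 2 - r))]
    exact hT.bddAbove_image (by fun_prop)
  exact le_ciSup hbdd ⟨x, hx⟩

theorem asymErr_le (hα : 0 < α) (hβ : 0 < β) (hT : T.Nonempty) {z : E} {R : ℝ}
    (h : ∀ x ∈ T, ‖x - z‖ ^ 2 ≤ R) :
    asymErr α β T z (α * R / (α + β)) ≤ α * β / (α + β) * R :=
  haveI := hT.to_subtype
  ciSup_le fun x => asymLoss_sub_le hα hβ (sq_nonneg _) (h x x.2)

theorem mul_sub_le_asymErr (hα : 0 < α) (hβ : 0 < β) (hT : IsCompact T) {x y : E}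
    (hx : x ∈ T) (hy : y ∈ T) (z : E) (r : ℝ) :
    α * β / (α + β) * (‖x - z‖ ^ 2 - ‖y - z‖ ^ 2) ≤ asymErr α β T z r := by
  have h := mul_sub_le_of_asymLoss_le hα hβ (asymLoss_le_asymErr hT hx z r)
    (asymLoss_le_asymErr hT hy z r)
  rwa [sub_sub_sub_cancel_right] at h

end asymErr

section EinfAB

variable {d : ℕ} {α β : ℝ} {T : Set (EuclideanSpace ℝ (Fin d))}

theorem sum_sq_sub_affine_eq (a x : EuclideanSpace ℝ (Fin d)) (c : ℝ) :
    (∑ j, x j ^ 2) - (⟪a, x⟫ + c) = ‖x - (2 : ℝ)⁻¹ • a‖ ^ 2 - (‖(2 : ℝ)⁻¹ • a‖ ^ 2 + c) := by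
  rw [← EuclideanSpace.real_norm_sq_eq, norm_sub_sq_real, real_inner_smul_right, real_inner_comm]
  ring

theorem EinfAB_eq_iInf_asymErr :
    EinfAB d α β T = ⨅ (a : EuclideanSpace ℝ (Fin d)) (c : ℝ),
      asymErr α β T ((2 : ℝ)⁻¹ • a) (‖(2 : ℝ)⁻¹ • a‖ ^ 2 + c) := by
  simp only [EinfAB, asymErr, asymLoss, sum_sq_sub_affine_eq]

theorem le_EinfAB {b : ℝ} (h : ∀ z r, b ≤ asymErr α β T z r) : b ≤ EinfAB d α β T := by
  rw [EinfAB_eq_iInf_asymErr]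
  exact le_ciInf fun a => le_ciInf fun c => h _ _

theorem EinfAB_le_asymErr (hα : 0 ≤ α) (hβ : 0 ≤ β) (z : EuclideanSpace ℝ (Fin d)) (r : ℝ) :
    EinfAB d α β T ≤ asymErr α β T z r := by
  have hbdd : ∀ a, BddBelow
      (range fun c => asymErr α β T ((2 : ℝ)⁻¹ • a) (‖(2 : ℝ)⁻¹ • a‖ ^ 2 + c)) :=
    fun a => ⟨0, by rintro _ ⟨c, rfl⟩; exact asymErr_nonneg hα hβ _ _⟩
  rw [EinfAB_eq_iInf_asymErr]
  refine (ciInf_le ⟨0, ?_⟩ ((2 : ℝ) • z)).trans ((ciInf_le (hbdd _) (r - ‖z‖ ^ 2)).trans ?_)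
  · rintro _ ⟨a, rfl⟩
    exact le_ciInf fun c => asymErr_nonneg hα hβ _ _
  · simp [smul_smul]

end EinfAB

theorem le_asymErr_convexHull {d : ℕ} {α β : ℝ} (hα : 0 < α) (hβ : 0 < β)
    (v : Fin (d + 1) → EuclideanSpace ℝ (Fin d)) {t R : ℝ}
    (hdet : (t ^ 2 + R) ^ (d + 1) ≤ t ^ 2 * (simplexEdgeMatrix v).det ^ 2)
    (z : EuclideanSpace ℝ (Fin d)) (r : ℝ) :
    α * β / (α + β) * R ≤ asymErr α β (convexHull ℝ (range v)) z r := by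
  set T := convexHull ℝ (range v)
  have hvT : ∀ i, v i ∈ T := fun i => subset_convexHull ℝ _ (mem_range_self i)
  have hTc : IsCompact T := (finite_range v).isCompact_convexHull (𝕜 := ℝ)
  obtain ⟨p, hpT, hp⟩ := exists_forall_norm_sub_sq_add_le ⟨v 0, hvT 0⟩ hTc.isComplete
    (convex_convexHull ℝ _) z
  obtain ⟨i₁, hi₁⟩ := Finite.exists_max fun i => ‖v i - z‖ ^ 2
  set ρ := ‖v i₁ - z‖ ^ 2 - ‖p - z‖ ^ 2
  have hvp : ∀ i, ‖v i - p‖ ^ 2 ≤ ρ := fun i => by linarith [hp (v i) (hvT i), hi₁ i]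
  have hRρ : R ≤ ρ := by
    have hρ : 0 ≤ t ^ 2 + ρ := by nlinarith [hvp 0, sq_nonneg ‖v 0 - p‖]
    have := hdet.trans (sq_mul_sq_det_simplexEdgeMatrix_le v p t hvp)
    linarith [le_of_pow_le_pow_left₀ d.succ_ne_zero hρ this]
  calc α * β / (α + β) * R ≤ α * β / (α + β) * ρ := by gcongr
    _ ≤ asymErr α β T z r := mul_sub_le_asymErr hα hβ hTc (hvT i₁) hpT z r

theorem regular_simplex_minimizes_asymmetric_uniform_error_general
    (d : ℕ) (hd : 0 < d) (α β : ℝ) (hα : 0 < α) (hβ : 0 < β)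
    (v₀ v : Fin (d + 1) → EuclideanSpace ℝ (Fin d))
    (h₀reg : ∀ i j k l : Fin (d + 1), i ≠ j → k ≠ l →
      dist (v₀ i) (v₀ j) = dist (v₀ k) (v₀ l))
    (h₀vol : volume (convexHull ℝ (Set.range v₀)) = 1)
    (hvol : volume (convexHull ℝ (Set.range v)) = 1) :
    EinfAB d α β (convexHull ℝ (Set.range v)) ≥
      EinfAB d α β (convexHull ℝ (Set.range v₀)) := by
  have : NeZero d := ⟨hd.ne'⟩
  obtain ⟨g, hg⟩ := exists_inner_sub_eq_of_dist_eq v₀ fun i j hij =>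
    h₀reg i j 0 1 hij Fin.zero_ne_one'
  set r := dist (v₀ 0) (v₀ 1) ^ 2 / (2 * (d + 1))
  have hgram : ∀ i j, ⟪v₀ i - g, v₀ j - g⟫ = if i = j then d * r else -√r ^ 2 := by
    intro i j
    rw [hg, Real.sq_sqrt (by positivity)]
    simp [r]
  have hdet : (√r ^ 2 + d * r) ^ (d + 1) ≤ √r ^ 2 * (simplexEdgeMatrix v).det ^ 2 := by
    rw [← sq_mul_sq_det_simplexEdgeMatrix_eq v₀ g _ _ hgram, ← sq_abs (simplexEdgeMatrix v).det,
      abs_det_simplexEdgeMatrix_eq_of_volume_eq (hvol.trans h₀vol.symm) (by simp [hvol]), sq_abs]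
  have hT₀ : ∀ x ∈ convexHull ℝ (range v₀), ‖x - g‖ ^ 2 ≤ d * r := fun x hx =>
    norm_sub_sq_le_of_mem_convexHull hx fun i => by
      rw [← real_inner_self_eq_norm_sq, hgram, if_pos rfl]
  calc EinfAB d α β (convexHull ℝ (range v₀))
      ≤ asymErr α β (convexHull ℝ (range v₀)) g (α * (d * r) / (α + β)) :=
        EinfAB_le_asymErr hα.le hβ.le _ _
    _ ≤ α * β / (α + β) * (d * r) :=
        asymErr_le hα hβ ⟨v₀ 0, subset_convexHull ℝ _ (mem_range_self 0)⟩ hT₀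
    _ ≤ EinfAB d α β (convexHull ℝ (range v)) := le_EinfAB (le_asymErr_convexHull hα hβ v hdet)

/-- Among all `d`-simplices of unit volume, the asymmetric uniform error of best affine
approximation of `Q(x) = ∑ xⱼ²` is minimized by the regular simplex. -/
theorem regular_simplex_minimizes_asymmetric_uniform_error
    (d : ℕ) (hd : 0 < d) (α β : ℝ) (hα : 0 < α) (hβ : 0 < β)
    (v₀ v : Fin (d + 1) → EuclideanSpace ℝ (Fin d))
    (h₀ind : AffineIndependent ℝ v₀)
    (h₀reg : ∀ i j k l : Fin (d + 1), i ≠ j → k ≠ l →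
      dist (v₀ i) (v₀ j) = dist (v₀ k) (v₀ l))
    (h₀vol : volume (convexHull ℝ (Set.range v₀)) = 1)
    (hind : AffineIndependent ℝ v)
    (hvol : volume (convexHull ℝ (Set.range v)) = 1) :
    EinfAB d α β (convexHull ℝ (Set.range v)) ≥
      EinfAB d α β (convexHull ℝ (Set.range v₀)) :=
  regular_simplex_minimizes_asymmetric_uniform_error_general d hd α β hα hβ v₀ v h₀reg h₀vol hvol
end

section
/- Let d ∈ ℕ, 1 ≤ p < ∞, and let T ⊂ ℝ^d be a d-simplex with vertices v¹, …, v^{d+1}. Let L be the unique affine function on ℝ^d with L(vⁱ) = Q(vⁱ) for i = 1, …, d+1 (the linear interpolant of Q at the vertices). Then L(x) ≥ Q(x) for all x ∈ T, and (∫_T (L(x) − Q(x))^p dx)^{1/p} = inf{ (∫_T (u(x) − Q(x))^p dx)^{1/p} : u affine, u(x) ≥ Q(x) for all x ∈ T }; i.e., the best one-sided L_p-approximation of Q from above by affine functions on T coincides with the error of linear interpolation of Q at the vertices of T. -/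
open MeasureTheory Set

/-!
Since `Q = ‖·‖²`, the function `Q - L` is convex and vanishes at the vertices, so by the maximum
principle it is `≤ 0` on the simplex. If an affine `u` lies above `Q` on the simplex, then
`u ≥ Q = L` at the vertices, and `L - u` is again convex, so `u ≥ L` on the whole simplex. Hence
the `L_p`-error of `L` bounds that of every admissible `u` from below, and it is attained.
-/

section MaximumPrinciple

variable {𝕜 E : Type*} [Field 𝕜] [LinearOrder 𝕜] [IsStrictOrderedRing 𝕜]
  [AddCommGroup E] [Module 𝕜 E] {s : Set E} {f g : E → 𝕜}

theorem ConvexOn.le_of_mem_convexHull_of_le (hf : ConvexOn 𝕜 (convexHull 𝕜 s) f)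
    (hg : ConcaveOn 𝕜 (convexHull 𝕜 s) g) (hfg : ∀ y ∈ s, f y ≤ g y) {x : E}
    (hx : x ∈ convexHull 𝕜 s) : f x ≤ g x := by
  obtain ⟨y, hy, hxy⟩ := (hf.sub hg).exists_ge_of_mem_convexHull (subset_convexHull 𝕜 s) hx
  simpa [sub_nonpos] using hxy.trans (sub_nonpos.2 (hfg y hy))

end MaximumPrinciple

section InnerProductSpace

variable {E : Type*} [NormedAddCommGroup E] [InnerProductSpace ℝ E] {s : Set E}

theorem convexOn_inner_add_const (hs : Convex ℝ s) (a : E) (c : ℝ) :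
    ConvexOn ℝ s fun x => inner ℝ a x + c :=
  ((innerₛₗ ℝ a).convexOn hs).add_const c

theorem concaveOn_inner_add_const (hs : Convex ℝ s) (a : E) (c : ℝ) :
    ConcaveOn ℝ s fun x => inner ℝ a x + c :=
  ((innerₛₗ ℝ a).concaveOn hs).add_const c

theorem convexOn_sq_norm (hs : Convex ℝ s) : ConvexOn ℝ s fun x : E => ‖x‖ ^ 2 :=
  (convexOn_univ_norm.subset (subset_univ s) hs).pow (fun x _ => norm_nonneg x) 2

end InnerProductSpace

theorem rpow_setIntegral_rpow_le {α : Type*} [MeasurableSpace α] {μ : Measure α} {s : Set α}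
    (hs : MeasurableSet s) {f g : α → ℝ} {p : ℝ} (hp : 0 ≤ p) (hf : ∀ x ∈ s, 0 ≤ f x)
    (hfg : ∀ x ∈ s, f x ≤ g x) (hg : IntegrableOn (fun x => g x ^ p) s μ) :
    (∫ x in s, f x ^ p ∂μ) ^ (1 / p) ≤ (∫ x in s, g x ^ p ∂μ) ^ (1 / p) := by
  have hfp : ∀ x ∈ s, 0 ≤ f x ^ p := fun x hx => Real.rpow_nonneg (hf x hx) p
  have hfgp : ∀ x ∈ s, f x ^ p ≤ g x ^ p := fun x hx => Real.rpow_le_rpow (hf x hx) (hfg x hx) hp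
  refine Real.rpow_le_rpow (setIntegral_nonneg hs hfp) ?_ (by positivity)
  exact integral_mono_of_nonneg (ae_restrict_of_forall_mem hs hfp) hg
    (ae_restrict_of_forall_mem hs hfgp)

theorem linear_interpolation_is_best_onesided_above_general
    (d : ℕ) (p : ℝ) (hp : 1 ≤ p)
    (v : Fin (d + 1) → EuclideanSpace ℝ (Fin d))
    (a : EuclideanSpace ℝ (Fin d)) (c : ℝ)
    (hinterp : ∀ i : Fin (d + 1), (inner ℝ a (v i) : ℝ) + c = ∑ j, v i j ^ 2) :
    (∀ x ∈ convexHull ℝ (Set.range v), (∑ j, x j ^ 2) ≤ (inner ℝ a x : ℝ) + c) ∧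
    (∫ x in convexHull ℝ (Set.range v),
        (((inner ℝ a x : ℝ) + c) - ∑ j, x j ^ 2) ^ p) ^ (1 / p) =
      sInf {r : ℝ | ∃ (b : EuclideanSpace ℝ (Fin d)) (e : ℝ),
        (∀ x ∈ convexHull ℝ (Set.range v), (∑ j, x j ^ 2) ≤ (inner ℝ b x : ℝ) + e) ∧
        r = (∫ x in convexHull ℝ (Set.range v),
          (((inner ℝ b x : ℝ) + e) - ∑ j, x j ^ 2) ^ p) ^ (1 / p)} := by
  simp only [← EuclideanSpace.real_norm_sq_eq] at hinterp ⊢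
  set S := convexHull ℝ (range v)
  have hS : Convex ℝ S := convex_convexHull ℝ _
  have hScompact : IsCompact S := (finite_range v).isCompact_convexHull ℝ
  have hL : ∀ x ∈ S, ‖x‖ ^ 2 ≤ inner ℝ a x + c := fun x =>
    (convexOn_sq_norm hS).le_of_mem_convexHull_of_le (concaveOn_inner_add_const hS a c)
      (forall_mem_range.2 fun i => (hinterp i).ge)
  refine ⟨hL, (IsLeast.csInf_eq ?_).symm⟩
  refine ⟨⟨a, c, hL, rfl⟩, ?_⟩
  rintro _ ⟨b, e, hu, rfl⟩
  have hLu : ∀ x ∈ S, inner ℝ a x + c ≤ inner ℝ b x + e := fun x =>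
    (convexOn_inner_add_const hS a c).le_of_mem_convexHull_of_le
      (concaveOn_inner_add_const hS b e)
      (forall_mem_range.2 fun i => hinterp i ▸ hu _ (subset_convexHull ℝ _ (mem_range_self i)))
  have hcont : Continuous fun x => (inner ℝ b x + e - ‖x‖ ^ 2) ^ p :=
    (by fun_prop : Continuous fun x => inner ℝ b x + e - ‖x‖ ^ 2).rpow_const
      fun _ => Or.inr (by linarith)
  exact rpow_setIntegral_rpow_le hScompact.isClosed.measurableSet (by linarith)
    (fun x hx => sub_nonneg.2 (hL x hx)) (fun x hx => sub_le_sub_right (hLu x hx) _)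
    (hcont.continuousOn.integrableOn_compact hScompact)

/-- The linear interpolant `L(x) = ⟪a, x⟫ + c` of `Q(x) = ∑ xⱼ²` at the vertices of a
`d`-simplex lies above `Q` on the simplex, and its `L_p`-deviation from `Q` equals the
error of best one-sided `L_p`-approximation of `Q` from above by affine functions. -/
theorem linear_interpolation_is_best_onesided_above
    (d : ℕ) (hd : 0 < d) (p : ℝ) (hp : 1 ≤ p)
    (v : Fin (d + 1) → EuclideanSpace ℝ (Fin d))
    (hind : AffineIndependent ℝ v)
    (a : EuclideanSpace ℝ (Fin d)) (c : ℝ)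
    (hinterp : ∀ i : Fin (d + 1), (inner ℝ a (v i) : ℝ) + c = ∑ j, v i j ^ 2) :
    (∀ x ∈ convexHull ℝ (Set.range v), (∑ j, x j ^ 2) ≤ (inner ℝ a x : ℝ) + c) ∧
    (∫ x in convexHull ℝ (Set.range v),
        (((inner ℝ a x : ℝ) + c) - ∑ j, x j ^ 2) ^ p) ^ (1 / p) =
      sInf {r : ℝ | ∃ (b : EuclideanSpace ℝ (Fin d)) (e : ℝ),
        (∀ x ∈ convexHull ℝ (Set.range v), (∑ j, x j ^ 2) ≤ (inner ℝ b x : ℝ) + e) ∧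
        r = (∫ x in convexHull ℝ (Set.range v),
          (((inner ℝ b x : ℝ) + e) - ∑ j, x j ^ 2) ^ p) ^ (1 / p)} :=
  linear_interpolation_is_best_onesided_above_general d p hp v a c hinterp
end

section
/- Let α, β > 0. There exists a constant Υ > 0, depending only on α and β, such that for every L > 0, inf_{k, c ∈ ℝ} sup_{t ∈ [0, L]} ( α·max(t² − k t − c, 0) + β·max(−(t² − k t − c), 0) ) ≥ Υ · L²; i.e., the asymmetric uniform error of best approximation of t ↦ t² by affine functions on an interval of length L is bounded below by a constant times L². -/
open Set

/-- There is a constant `Υ > 0`, depending only on `α` and `β`, such that the asymmetric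
uniform error of best approximation of `t ↦ t²` by affine functions `t ↦ k·t + c` on any
interval `[0, L]` is at least `Υ · L²`. -/
theorem one_dim_asymmetric_uniform_error_lower_bound
    (α β : ℝ) (hα : 0 < α) (hβ : 0 < β) :
    ∃ Υ : ℝ, 0 < Υ ∧ ∀ L : ℝ, 0 < L →
      (⨅ (k : ℝ) (c : ℝ), ⨆ t : Set.Icc (0 : ℝ) L,
        (α * max ((t : ℝ) ^ 2 - k * t - c) 0 +
          β * max (-((t : ℝ) ^ 2 - k * t - c)) 0)) ≥ Υ * L ^ 2 := by
  refine ⟨min α β / 8, by positivity, fun L hL => ?_⟩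
  rw [ge_iff_le]
  refine le_ciInf fun k => le_ciInf fun c => ?_
  set f : ℝ → ℝ := fun t => α * max (t ^ 2 - k * t - c) 0 +
      β * max (-(t ^ 2 - k * t - c)) 0 with hf
  have hcont : ContinuousOn f (Icc 0 L) := by
    apply Continuous.continuousOn
    fun_prop
  have hbdd : BddAbove (Set.range fun t : Set.Icc (0 : ℝ) L =>
      (α * max ((t : ℝ) ^ 2 - k * t - c) 0 +
        β * max (-((t : ℝ) ^ 2 - k * t - c)) 0)) := by
    have h1 : BddAbove (f '' Icc 0 L) :=
      (isCompact_Icc.image_of_continuousOn hcont).bddAbove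
    rwa [Set.image_eq_range] at h1
  have key : ∃ t₀ ∈ Icc (0 : ℝ) L, min α β / 8 * L ^ 2 ≤ f t₀ := by
    by_cases h : (L / 2) ^ 2 - k * (L / 2) - c ≤ -(L ^ 2 / 8)
    · refine ⟨L / 2, ⟨by linarith, by linarith⟩, ?_⟩
      have h1 : (0 : ℝ) ≤ max ((L / 2) ^ 2 - k * (L / 2) - c) 0 := le_max_right _ _
      have h2 : L ^ 2 / 8 ≤ max (-((L / 2) ^ 2 - k * (L / 2) - c)) 0 :=
        le_trans (by linarith) (le_max_left _ _)
      have hm : min α β ≤ β := min_le_right α β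
      have : min α β / 8 * L ^ 2 ≤ β * (L ^ 2 / 8) := by nlinarith [mul_le_mul_of_nonneg_right hm (sq_nonneg L)]
      have : β * (L ^ 2 / 8) ≤ β * max (-((L / 2) ^ 2 - k * (L / 2) - c)) 0 :=
        mul_le_mul_of_nonneg_left h2 hβ.le
      simp only [hf]
      nlinarith [mul_nonneg hα.le h1]
    · push_neg at h
      have hsum : L ^ 2 / 4 < (0 ^ 2 - k * 0 - c) + (L ^ 2 - k * L - c) := by nlinarith
      have hm : min α β ≤ α := min_le_left α β
      rcases le_or_gt (L ^ 2 / 8) (0 ^ 2 - k * 0 - c) with h0 | h0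
      · refine ⟨0, ⟨le_refl 0, hL.le⟩, ?_⟩
        have h2 : L ^ 2 / 8 ≤ max ((0:ℝ) ^ 2 - k * 0 - c) 0 :=
          le_trans h0 (le_max_left _ _)
        have h1 : (0 : ℝ) ≤ max (-((0:ℝ) ^ 2 - k * 0 - c)) 0 := le_max_right _ _
        simp only [hf]
        set M := max ((0:ℝ) ^ 2 - k * 0 - c) 0 with hM
        set N := max (-((0:ℝ) ^ 2 - k * 0 - c)) 0 with hN
        nlinarith [mul_le_mul_of_nonneg_left h2 hα.le, mul_nonneg hβ.le h1, mul_le_mul_of_nonneg_right hm (sq_nonneg L)]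
      · refine ⟨L, ⟨hL.le, le_refl L⟩, ?_⟩
        have h2 : L ^ 2 / 8 ≤ max (L ^ 2 - k * L - c) 0 :=
          le_trans (by linarith) (le_max_left _ _)
        have h1 : (0 : ℝ) ≤ max (-(L ^ 2 - k * L - c)) 0 := le_max_right _ _
        simp only [hf]
        set M := max (L ^ 2 - k * L - c) 0 with hM
        set N := max (-(L ^ 2 - k * L - c)) 0 with hN
        nlinarith [mul_le_mul_of_nonneg_left h2 hα.le, mul_nonneg hβ.le h1, mul_le_mul_of_nonneg_right hm (sq_nonneg L)]
  obtain ⟨t₀, ht₀, hle⟩ := key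
  exact le_trans hle (le_ciSup hbdd ⟨t₀, ht₀⟩)
end
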